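/- arXiv:0811.4101 — 5 statements merged into one kernel-verified Lean document; each statement's English description precedes it below -/
import Mathlib

section
/- Let G be a compactly generated totally disconnected locally compact Hausdorff group all of whose discrete quotients are finite (i.e. for every closed normal subgroup N with G/N discrete, G/N is finite). Then the discrete residual Res(G) is cocompact in G and admits no non-trivial discrete quotient and no non-trivial compact quotient: for every proper closed normal subgroup N of Res(G), the quotient Res(G)/N is neither discrete nor compact unless it is trivial. -/
open scoped Pointwise Topology

/-- A topological group is *compactly generated* if it is generated, as a group,
by some compact subset. -/
def CompactlyGeneratedGroup (G : Type*) [Group G] [TopologicalSpace G] : Prop :=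
  ∃ S : Set G, IsCompact S ∧ Subgroup.closure S = ⊤

/-- A topological group is *topologically simple* if it is non-trivial and its only
closed normal subgroups are the trivial subgroup and the whole group. -/
def IsTopologicallySimple (G : Type*) [Group G] [TopologicalSpace G] : Prop :=
  Nontrivial G ∧ ∀ H : Subgroup G, H.Normal → IsClosed (H : Set G) → H = ⊥ ∨ H = ⊤

/-- Two topological groups are *topologically isomorphic* if there is a group
isomorphism between them which is also a homeomorphism. -/
def TopIsomorphic (G H : Type*) [Group G] [TopologicalSpace G] [Group H]
    [TopologicalSpace H] : Prop :=
  ∃ e : G ≃* H, Continuous e ∧ Continuous e.symm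

/-- `G` is a quasi-product with quasi-factors `N 0, …, N (p-1)` if these are closed
normal subgroups of `G` such that the multiplication map `N 0 × ⋯ × N (p-1) → G`
is injective with dense image. -/
def IsQuasiProduct {G : Type*} [Group G] [TopologicalSpace G] {p : ℕ}
    (N : Fin p → Subgroup G) : Prop :=
  (∀ i, (N i).Normal) ∧ (∀ i, IsClosed ((N i) : Set G)) ∧
  Function.Injective (fun x : (∀ i, ↥(N i)) => (List.ofFn fun i => (x i : G)).prod) ∧
  DenseRange (fun x : (∀ i, ↥(N i)) => (List.ofFn fun i => (x i : G)).prod)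

/-!
Let `R` be the discrete residual and `U` a compact open subgroup (van Dantzig). If `S ≤ R` is
normal in `G` and `U ∩ R ⊆ S`, then, since the compact sets `N ∩ U` (`N` open normal) shrink to
`U ∩ R`, some `N ∩ U` lies in `W S` for a neighbourhood `W` of `1` whose conjugates by a compact
generating set stay in `U`. Then `N ∩ U S` is normalised by the generators: it is an open normal
subgroup inside `U S`, so it contains `R`, and `R ≤ S`. For `S = R` it has finite index, whence
`G / R` is compact.

For an open normal subgroup `M` of `R`, write `G = R K` with `K` compact; a small enough `U` has
`U ∩ R` inside the normal core of `M` in `G`, so `M = R`. A closed normal `N < R` with `R / N`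
discrete would be open. If `R / N` is compact, an open subgroup of `R` avoiding a point outside
`N` maps to an open subgroup of the compact group `R / N`, whose open normal core pulls back to a
proper open normal subgroup of `R`.
-/

open Set Filter

namespace Subgroup

variable {G : Type*} [Group G]

theorem normal_of_conj_mem_of_closure_eq_top {B : Set G} (hB : closure B = ⊤) {H : Subgroup G}
    (hH : ∀ b ∈ B ∪ B⁻¹, ∀ h ∈ H, b * h * b⁻¹ ∈ H) : H.Normal := by
  rw [← normalizer_eq_top_iff, eq_top_iff, ← hB, closure_le]
  intro b hb
  rw [SetLike.mem_coe, mem_normalizer_iff]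
  refine fun h => ⟨hH b (.inl hb) h, fun hbh => ?_⟩
  simpa [mul_assoc] using hH b⁻¹ (.inr (by simpa using hb)) _ hbh

end Subgroup

section TopologicalGroup

variable {G : Type*} [Group G] [TopologicalSpace G] [IsTopologicalGroup G]

theorem IsCompact.eventually_forall_conj_mem {K Ω : Set G} (hK : IsCompact K)
    (hΩ : Ω ∈ 𝓝 (1 : G)) : ∀ᶠ w in 𝓝 (1 : G), ∀ k ∈ K, k * w * k⁻¹ ∈ Ω :=
  hK.eventually_forall_of_forall_eventually fun k _ => by
    have : Tendsto (fun p : G × G => p.2 * p.1 * p.2⁻¹) (𝓝 (1, k)) (𝓝 1) := by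
      simpa using (by fun_prop : Continuous fun p : G × G => p.2 * p.1 * p.2⁻¹).tendsto (1, k)
    exact this hΩ

theorem exists_isCompact_isOpen_subgroup_subset [LocallyCompactSpace G] [T2Space G]
    [TotallyDisconnectedSpace G] {Ω : Set G} (hΩ : Ω ∈ 𝓝 (1 : G)) :
    ∃ U : Subgroup G, IsCompact (U : Set G) ∧ IsOpen (U : Set G) ∧ (U : Set G) ⊆ Ω := by
  obtain ⟨C, hC, hCΩ, hCc⟩ := local_compact_nhds hΩ
  obtain ⟨W, hW, hW1, hWC⟩ := loc_compact_Haus_tot_disc_of_zero_dim.mem_nhds_iff.1 hC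
  have hWc : IsCompact W := hCc.of_isClosed_subset hW.1 hWC
  obtain ⟨V, hV, hVW⟩ := compact_open_separated_mul_left hWc hW.2 subset_rfl
  -- The stabiliser of `W` under left translation is open as it contains `V ∩ V⁻¹`.
  set U := MulAction.stabilizer G W
  have hUW : (U : Set G) ⊆ W := fun g hg => by
    simpa using (MulAction.mem_stabilizer_iff.1 hg).subset (smul_mem_smul_set (a := g) hW1)
  have hUo : IsOpen (U : Set G) := by
    refine U.isOpen_of_mem_nhds (mem_of_superset (inter_mem hV (inv_mem_nhds_one G hV)) ?_)
    intro g hg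
    refine MulAction.mem_stabilizer_iff.2 (subset_antisymm ?_ ?_)
    · exact (smul_set_subset_mul hg.1).trans hVW
    · exact subset_smul_set_iff.2 ((smul_set_subset_mul (mem_inv.1 hg.2)).trans hVW)
  exact ⟨U, hWc.of_isClosed_subset (U.isClosed_of_isOpen hUo) hUW, hUo,
    hUW.trans (hWC.trans hCΩ)⟩

theorem compactSpace_quotient_of_le_sup {U P S : Subgroup G} (hU : IsCompact (U : Set G))
    [S.Normal] [Finite (G ⧸ P)] (hP : P ≤ U ⊔ S) : CompactSpace (G ⧸ S) := by
  rw [← isCompact_univ_iff]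
  have hcover : (univ : Set (G ⧸ S)) ⊆
      ⋃ q : G ⧸ P, QuotientGroup.mk '' (q.out • (U : Set G)) := by
    rintro x -
    obtain ⟨g, rfl⟩ := QuotientGroup.mk_surjective x
    obtain ⟨u, hu, s, hs, hus⟩ := Subgroup.mem_sup_of_normal_right.1
      (hP (QuotientGroup.eq.1 (QuotientGroup.out_eq' (g : G ⧸ P))))
    refine mem_iUnion.2 ⟨g, _, smul_mem_smul_set hu, QuotientGroup.eq.2 ?_⟩
    simpa [smul_eq_mul, mul_assoc, ← hus] using hs
  exact (isCompact_iUnion fun q => (hU.smul _).image continuous_quot_mk).of_isClosed_subset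
    isClosed_univ hcover

theorem exists_isCompact_forall_mk_eq [LocallyCompactSpace G] (S : Subgroup G)
    [CompactSpace (G ⧸ S)] : ∃ K : Set G, IsCompact K ∧ ∀ g : G, ∃ k ∈ K, (k : G ⧸ S) = g := by
  choose C hC hCc using fun g : G => exists_compact_mem_nhds g
  obtain ⟨T, hT⟩ := isCompact_univ.elim_finite_subcover
    (fun g : G => (QuotientGroup.mk '' interior (C g) : Set (G ⧸ S)))
    (fun g => QuotientGroup.isOpenMap_coe _ isOpen_interior)
    fun q _ => mem_iUnion.2 ⟨q.out, q.out, mem_interior_iff_mem_nhds.2 (hCc q.out), q.out_eq'⟩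
  refine ⟨⋃ g ∈ T, C g, T.finite_toSet.isCompact_biUnion fun g _ => hC g, fun g => ?_⟩
  obtain ⟨t, ht, k, hk, hkg⟩ := mem_iUnion₂.1 (hT (mem_univ (g : G ⧸ S)))
  exact ⟨k, mem_biUnion ht (interior_subset hk), hkg⟩

theorem exists_isOpen_normal_notMem_of_compactSpace_quotient [LocallyCompactSpace G]
    [T2Space G] [TotallyDisconnectedSpace G] {N : Subgroup G} [N.Normal]
    (hN : IsClosed (N : Set G)) [CompactSpace (G ⧸ N)] {x : G} (hx : x ∉ N) :
    ∃ M : Subgroup G, M.Normal ∧ IsOpen (M : Set G) ∧ x ∉ M := by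
  have hxN : IsOpen (x • (N : Set G))ᶜ := (hN.smul x).isOpen_compl
  obtain ⟨W, -, hWo, hWx⟩ := exists_isCompact_isOpen_subgroup_subset
    (hxN.mem_nhds fun h => hx (by simpa using (mem_smul_set_iff_inv_smul_mem.1 h)))
  set W' := W.map (QuotientGroup.mk' N)
  have hW'o : IsOpen (W' : Set (G ⧸ N)) := QuotientGroup.isOpenMap_coe _ hWo
  obtain ⟨V, hVW⟩ := IsTopologicalGroup.exist_openNormalSubgroup_sub_clopen_nhds_of_one
    ⟨W'.isClosed_of_isOpen hW'o, hW'o⟩ W'.one_mem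
  refine ⟨V.toSubgroup.comap (QuotientGroup.mk' N), inferInstance,
    V.isOpen.preimage continuous_quot_mk, fun hxV => ?_⟩
  obtain ⟨w, hw, hwx⟩ := hVW hxV
  refine hWx hw (mem_smul_set_iff_inv_smul_mem.2 ?_)
  simpa using N.inv_mem (QuotientGroup.eq.1 hwx)

end TopologicalGroup

section DiscreteResidual

variable {G : Type*} [Group G] [TopologicalSpace G]

variable (G) in
def discreteResidual : Subgroup G :=
  sInf {N : Subgroup G | N.Normal ∧ IsOpen (N : Set G)}

theorem discreteResidual_le {N : Subgroup G} (hN : N.Normal) (hNo : IsOpen (N : Set G)) :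
    discreteResidual G ≤ N :=
  sInf_le ⟨hN, hNo⟩

instance discreteResidual_normal : (discreteResidual G).Normal :=
  ⟨fun n hn g => Subgroup.mem_sInf.2 fun N hN => hN.1.conj_mem n (Subgroup.mem_sInf.1 hn N hN) g⟩

variable [IsTopologicalGroup G]

theorem isClosed_discreteResidual : IsClosed (discreteResidual G : Set G) := by
  rw [discreteResidual, Subgroup.coe_sInf]
  exact isClosed_biInter fun N hN => N.isClosed_of_isOpen hN.2

theorem exists_isOpen_normal_inter_subset {K Ω : Set G} (hKc : IsCompact K) (hKcl : IsClosed K)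
    (hΩ : IsOpen Ω) (hKΩ : K ∩ discreteResidual G ⊆ Ω) :
    ∃ N : Subgroup G, N.Normal ∧ IsOpen (N : Set G) ∧ (N : Set G) ∩ K ⊆ Ω := by
  let ι := {N : Subgroup G // N.Normal ∧ IsOpen (N : Set G)}
  have htop : (⊤ : Subgroup G).Normal ∧ IsOpen ((⊤ : Subgroup G) : Set G) :=
    ⟨inferInstance, isOpen_univ⟩
  have : Nonempty ι := ⟨⟨⊤, htop⟩⟩
  have hdir : Directed (· ⊇ ·) fun N : ι => (N.1 : Set G) ∩ K := by
    rintro ⟨N₁, hN₁, hN₁o⟩ ⟨N₂, hN₂, hN₂o⟩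
    exact ⟨⟨N₁ ⊓ N₂, inferInstance, hN₁o.inter hN₂o⟩,
      inter_subset_inter_left K inter_subset_left, inter_subset_inter_left K inter_subset_right⟩
  obtain ⟨⟨N, hN, hNo⟩, hNΩ⟩ := exists_subset_nhds_of_isCompact' hdir
    (fun N => hKc.inter_left (N.1.isClosed_of_isOpen N.2.2))
    (fun N => (N.1.isClosed_of_isOpen N.2.2).inter hKcl)
    fun x hx => hΩ.mem_nhds <| hKΩ
      ⟨(mem_iInter.1 hx ⟨⊤, htop⟩).2, Subgroup.mem_sInf.2 fun N hN => (mem_iInter.1 hx ⟨N, hN⟩).1⟩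
  exact ⟨N, hN, hNo, hNΩ⟩

theorem exists_isOpen_normal_le_sup (hcg : CompactlyGeneratedGroup G) {U : Subgroup G}
    (hUc : IsCompact (U : Set G)) (hUo : IsOpen (U : Set G)) {S : Subgroup G} [S.Normal]
    (hSR : S ≤ discreteResidual G) (hUR : (U : Set G) ∩ discreteResidual G ⊆ S) :
    ∃ P : Subgroup G, P.Normal ∧ IsOpen (P : Set G) ∧ P ≤ U ⊔ S := by
  obtain ⟨B, hBc, hB⟩ := hcg
  obtain ⟨W, hWU, hWo, hW1⟩ := mem_nhds_iff.1
    ((hBc.union hBc.inv).eventually_forall_conj_mem (hUo.mem_nhds U.one_mem))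
  obtain ⟨N, hN, hNo, hNW⟩ := exists_isOpen_normal_inter_subset hUc
    (U.isClosed_of_isOpen hUo) (hWo.mul_right (t := S)) fun u hu =>
      ⟨1, hW1, u, hUR hu, one_mul u⟩
  refine ⟨N ⊓ (U ⊔ S), Subgroup.normal_of_conj_mem_of_closure_eq_top hB ?_,
    hNo.inter (Subgroup.isOpen_mono le_sup_left hUo), inf_le_right⟩
  rintro b hb y ⟨hyN, hyUS⟩
  refine ⟨hN.conj_mem y hyN b, ?_⟩
  obtain ⟨u, hu, s, hs, rfl⟩ := Subgroup.mem_sup_of_normal_right.1 hyUS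
  have huN : u ∈ N := by
    simpa using N.mul_mem hyN (N.inv_mem (discreteResidual_le hN hNo (hSR hs)))
  obtain ⟨w, hw, s', hs', rfl⟩ := hNW ⟨huN, hu⟩
  rw [show b * (w * s' * s) * b⁻¹ = (b * w * b⁻¹) * (b * (s' * s) * b⁻¹) by group]
  exact Subgroup.mul_mem_sup (hWU hw b hb) (‹S.Normal›.conj_mem _ (S.mul_mem hs' hs) b)

theorem discreteResidual_le_of_inter_subset (hcg : CompactlyGeneratedGroup G) {U : Subgroup G}
    (hUc : IsCompact (U : Set G)) (hUo : IsOpen (U : Set G)) {S : Subgroup G} [S.Normal]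
    (hSR : S ≤ discreteResidual G) (hUR : (U : Set G) ∩ discreteResidual G ⊆ S) :
    discreteResidual G ≤ S := by
  obtain ⟨P, hP, hPo, hPle⟩ := exists_isOpen_normal_le_sup hcg hUc hUo hSR hUR
  intro r hr
  obtain ⟨u, hu, s, hs, rfl⟩ :=
    Subgroup.mem_sup_of_normal_right.1 (hPle (discreteResidual_le hP hPo hr))
  have huR : u ∈ discreteResidual G := by
    simpa using (discreteResidual G).mul_mem hr ((discreteResidual G).inv_mem (hSR hs))
  exact S.mul_mem (hUR ⟨hu, huR⟩) hs

variable [LocallyCompactSpace G] [T2Space G] [TotallyDisconnectedSpace G]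

theorem compactSpace_quotient_discreteResidual (hcg : CompactlyGeneratedGroup G)
    (hfin : ∀ N : Subgroup G, N.Normal → IsClosed (N : Set G) →
      DiscreteTopology (G ⧸ N) → Finite (G ⧸ N)) :
    CompactSpace (G ⧸ discreteResidual G) := by
  obtain ⟨U, hUc, hUo, -⟩ := exists_isCompact_isOpen_subgroup_subset (univ_mem (f := 𝓝 (1 : G)))
  obtain ⟨P, hP, hPo, hPle⟩ := exists_isOpen_normal_le_sup hcg hUc hUo le_rfl inter_subset_right
  have := hfin P hP (P.isClosed_of_isOpen hPo) (QuotientGroup.discreteTopology hPo)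
  exact compactSpace_quotient_of_le_sup hUc hPle

theorem discreteResidual_le_of_inter_subset_of_conj_mem (hcg : CompactlyGeneratedGroup G)
    [CompactSpace (G ⧸ discreteResidual G)] {O : Subgroup G} (hOR : O ≤ discreteResidual G)
    (hO : ∀ r ∈ discreteResidual G, ∀ y ∈ O, r * y * r⁻¹ ∈ O) {Ω : Set G} (hΩ : Ω ∈ 𝓝 (1 : G))
    (hΩO : Ω ∩ discreteResidual G ⊆ O) : discreteResidual G ≤ O := by
  obtain ⟨K, hKc, hK⟩ := exists_isCompact_forall_mk_eq (discreteResidual G)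
  obtain ⟨U, hUc, hUo, hUΩ⟩ :=
    exists_isCompact_isOpen_subgroup_subset (hKc.eventually_forall_conj_mem hΩ)
  -- Every `g` is `r * k` with `r` in the residual and `k ∈ K`: conjugating by `k` keeps `U`
  -- inside `Ω`, and conjugating by `r` preserves `O`.
  have hUO : (U : Set G) ∩ discreteResidual G ⊆ O.normalCore := by
    rintro y ⟨hyU, hyR⟩ g
    obtain ⟨k, hk, hkg⟩ := hK g
    have hr : g * k⁻¹ ∈ discreteResidual G := by
      simpa [mul_assoc] using
        (discreteResidual_normal (G := G)).conj_mem _ (QuotientGroup.eq.1 hkg) k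
    have hky : k * y * k⁻¹ ∈ O :=
      hΩO ⟨hUΩ hyU k hk, (discreteResidual_normal (G := G)).conj_mem y hyR k⟩
    simpa [mul_assoc] using hO _ hr _ hky
  exact (discreteResidual_le_of_inter_subset hcg hUc hUo
    (O.normalCore_le.trans hOR) hUO).trans O.normalCore_le

theorem eq_top_of_isOpen_of_normal_discreteResidual (hcg : CompactlyGeneratedGroup G)
    [CompactSpace (G ⧸ discreteResidual G)] {M : Subgroup (discreteResidual G)} (hM : M.Normal)
    (hMo : IsOpen (M : Set (discreteResidual G))) : M = ⊤ := by
  obtain ⟨Ω, hΩo, hΩM⟩ := isOpen_induced_iff.1 hMo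
  have hΩO : Ω ∩ discreteResidual G ⊆ M.map (discreteResidual G).subtype :=
    fun y ⟨hyΩ, hyR⟩ => ⟨⟨y, hyR⟩, by rw [← hΩM]; exact hyΩ, rfl⟩
  have hΩ1 : (1 : G) ∈ Ω := by
    simpa using (hΩM ▸ M.one_mem : (1 : discreteResidual G) ∈ Subtype.val ⁻¹' Ω)
  have hR := discreteResidual_le_of_inter_subset_of_conj_mem hcg (Subgroup.map_subtype_le M)
    (fun r hr _ ⟨m, hm, hmy⟩ => ⟨⟨r, hr⟩ * m * ⟨r, hr⟩⁻¹, hM.conj_mem m hm _, by simp [← hmy]⟩)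
    (hΩo.mem_nhds hΩ1) hΩO
  rw [eq_top_iff]
  rintro ⟨r, hr⟩ -
  obtain ⟨m, hm, rfl⟩ := hR hr
  exact hm

end DiscreteResidual

/-- **Corollary (Caprace–Monod).** Let `G` be a compactly generated totally
disconnected locally compact Hausdorff group all of whose discrete quotients are
finite. Then the discrete residual `Res(G)` is cocompact and admits no
non-trivial discrete quotient and no non-trivial compact quotient. -/
theorem discrete_residual_no_discrete_or_compact_quotient (G : Type*) [Group G]
    [TopologicalSpace G] [IsTopologicalGroup G] [LocallyCompactSpace G] [T2Space G]
    [TotallyDisconnectedSpace G]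
    (hcg : CompactlyGeneratedGroup G)
    (hfin : ∀ N : Subgroup G, N.Normal → IsClosed (N : Set G) →
      DiscreteTopology (G ⧸ N) → Finite (G ⧸ N))
    (R : Subgroup G)
    (hR : R = sInf {N : Subgroup G | N.Normal ∧ IsOpen (N : Set G)}) :
    CompactSpace (G ⧸ R) ∧
    (∀ N : Subgroup ↥R, N.Normal → IsClosed (N : Set ↥R) → N ≠ ⊤ →
      ¬ DiscreteTopology (↥R ⧸ N) ∧ ¬ CompactSpace (↥R ⧸ N)) := by
  obtain rfl : R = discreteResidual G := hR
  have hcpt := compactSpace_quotient_discreteResidual hcg hfin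
  have : LocallyCompactSpace (discreteResidual G) :=
    isClosed_discreteResidual.locallyCompactSpace
  refine ⟨hcpt, fun N hN hNc hNtop => ⟨fun hdisc => ?_, fun hNcpt => ?_⟩⟩
  · exact hNtop (eq_top_of_isOpen_of_normal_discreteResidual hcg hN
      (QuotientGroup.discreteTopology_iff.1 hdisc))
  · obtain ⟨x, -, hx⟩ := SetLike.exists_of_lt hNtop.lt_top
    obtain ⟨M, hM, hMo, hxM⟩ := exists_isOpen_normal_notMem_of_compactSpace_quotient hNc hx
    exact hxM (eq_top_of_isOpen_of_normal_discreteResidual hcg hM hMo ▸ Subgroup.mem_top x)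
end

section
/- Let G be a compactly generated totally disconnected locally compact Hausdorff group. Then every identity neighbourhood V of G contains a compact normal subgroup Q of G such that every filtering family of non-discrete closed normal subgroups of the quotient group G/Q has non-trivial intersection. -/
/-!
By van Dantzig's theorem `V` contains a compact open subgroup `U`; its normal core `Q` is compact,
and the image of `U` in `G ⧸ Q` is a compact open subgroup with trivial normal core. Let `S` be a
compact generating set of `G ⧸ Q`; by compactness, the `x` with `s x s⁻¹ ∈ U` for all
`s ∈ S ∪ S⁻¹` form an open identity neighbourhood `W`. If `N ∩ U ⊆ W` for a normal subgroup `N`,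
then `N ∩ U` is normalised by `S`, hence normal, hence trivial, and `N` is discrete. So each member
of the family meets the compact set `U \ W`, and by Cantor's intersection theorem so does their
intersection, which therefore contains an element outside `W ∋ 1`.
-/

open scoped Pointwise Topology

open Set Filter

section Group

variable {G : Type*} [Group G]

theorem stabilizer_subset_of_one_mem {W : Set G} (h1W : (1 : G) ∈ W) :
    (MulAction.stabilizer G W : Set G) ⊆ W := fun g hg => by
  simpa [MulAction.mem_stabilizer_iff.1 hg] using smul_mem_smul_set (a := g) h1W

theorem Subgroup.normal_of_forall_conj_mem {S : Set G} (hS : Subgroup.closure S = ⊤)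
    {L : Subgroup G} (hL : ∀ g ∈ S ∪ S⁻¹, ∀ x ∈ L, g * x * g⁻¹ ∈ L) : L.Normal := by
  rw [← Subgroup.normalizer_eq_top_iff, eq_top_iff, ← hS, Subgroup.closure_le]
  refine fun g hg => Subgroup.mem_normalizer_iff.2 fun x => ⟨hL g (.inl hg) x, fun hx => ?_⟩
  simpa [mul_assoc] using hL g⁻¹ (.inr (by simpa using hg)) _ hx

theorem Subgroup.normalCore_map_mk'_normalCore (U : Subgroup G) :
    (U.map (QuotientGroup.mk' U.normalCore)).normalCore = ⊥ := by
  set f := QuotientGroup.mk' U.normalCore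
  have hcomap : (U.map f).normalCore.comap f ≤ U.normalCore :=
    Subgroup.normal_le_normalCore.2 <| (Subgroup.comap_mono (Subgroup.normalCore_le _)).trans
      (Subgroup.comap_map_eq_self (by rw [QuotientGroup.ker_mk']; exact U.normalCore_le)).le
  rw [← Subgroup.map_comap_eq_self_of_surjective (QuotientGroup.mk'_surjective _)
    (U.map f).normalCore, Subgroup.map_eq_bot_iff, QuotientGroup.ker_mk']
  exact hcomap

variable [TopologicalSpace G]

theorem CompactlyGeneratedGroup.of_surjective {H : Type*} [Group H] [TopologicalSpace H]
    (hG : CompactlyGeneratedGroup G) (f : G →* H) (hf : Continuous f)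
    (hsurj : Function.Surjective f) : CompactlyGeneratedGroup H := by
  obtain ⟨S, hSc, hS⟩ := hG
  refine ⟨f '' S, hSc.image hf, ?_⟩
  rw [← MonoidHom.map_closure, hS, Subgroup.map_top_of_surjective f hsurj]

theorem Subgroup.sInf_inter_nonempty_of_directedOn {F : Set (Subgroup G)} (hne : F.Nonempty)
    (hdir : DirectedOn (· ≥ ·) F) (hcl : ∀ N ∈ F, IsClosed (N : Set G)) {K : Set G}
    (hKc : IsCompact K) (hKcl : IsClosed K) (hK : ∀ N ∈ F, ((N : Set G) ∩ K).Nonempty) :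
    ((sInf F : Subgroup G) ∩ K : Set G).Nonempty := by
  have := hne.to_subtype
  rw [Subgroup.coe_sInf, biInter_eq_iInter, iInter_inter]
  refine IsCompact.nonempty_iInter_of_directed_nonempty_isCompact_isClosed _ ?_
    (fun N => hK N N.2) (fun N => hKc.inter_left (hcl N N.2))
    (fun N => (hcl N N.2).inter hKcl)
  exact hdir.directed_val.mono_comp (g := fun N : Subgroup G => (N : Set G) ∩ K) _
    fun _ _ h => inter_subset_inter_left K h

variable [IsTopologicalGroup G]

theorem isOpen_stabilizer_of_isCompact_of_isOpen {W : Set G} (hWc : IsCompact W)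
    (hWo : IsOpen W) : IsOpen (MulAction.stabilizer G W : Set G) := by
  obtain ⟨T, hT, hTW⟩ := compact_open_separated_mul_left hWc hWo subset_rfl
  refine Subgroup.isOpen_of_mem_nhds _ (mem_of_superset (inter_mem hT (inv_mem_nhds_one G hT)) ?_)
  rintro t ⟨ht, ht'⟩
  have hsub : t • W ⊆ W := (smul_set_subset_mul ht).trans hTW
  have hsup : t⁻¹ • W ⊆ W := (smul_set_subset_mul (mem_inv.1 ht')).trans hTW
  exact MulAction.mem_stabilizer_iff.2 (hsub.antisymm (subset_smul_set_iff.2 hsup))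

theorem exists_isOpen_isCompact_subgroup_subset [LocallyCompactSpace G] [T2Space G]
    [TotallyDisconnectedSpace G] {V : Set G} (hV : V ∈ 𝓝 1) :
    ∃ U : Subgroup G, IsOpen (U : Set G) ∧ IsCompact (U : Set G) ∧ (U : Set G) ⊆ V := by
  obtain ⟨C, hC, hCV, hCc⟩ := local_compact_nhds hV
  obtain ⟨W, hW, h1W, hWC⟩ := loc_compact_Haus_tot_disc_of_zero_dim.mem_nhds_iff.1 hC
  have hWc : IsCompact W := hCc.of_isClosed_subset hW.isClosed hWC
  have hUo := isOpen_stabilizer_of_isCompact_of_isOpen hWc hW.isOpen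
  have hUW := stabilizer_subset_of_one_mem h1W
  exact ⟨_, hUo, hWc.of_isClosed_subset (Subgroup.isClosed_of_isOpen _ hUo) hUW,
    hUW.trans (hWC.trans hCV)⟩

theorem isOpen_setOf_forall_conj_mem {K U : Set G} (hK : IsCompact K) (hU : IsOpen U) :
    IsOpen {x : G | ∀ g ∈ K, g * x * g⁻¹ ∈ U} := by
  have hconj : Continuous fun p : G × G => p.2 * p.1 * p.2⁻¹ := by fun_prop
  exact isOpen_iff_eventually.2 fun x hx => hK.eventually_forall_of_forall_eventually
    fun g hg => hconj.continuousAt.eventually_mem (hU.mem_nhds (hx g hg))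

theorem Subgroup.discreteTopology_of_inf_eq_bot {N U : Subgroup G} (hU : IsOpen (U : Set G))
    (h : N ⊓ U = ⊥) : DiscreteTopology N := by
  apply discreteTopology_of_isOpen_singleton_one
  convert hU.preimage continuous_subtype_val
  ext x
  refine ⟨fun hx => by simp [mem_singleton_iff.1 hx, U.one_mem], fun hx => ?_⟩
  have : (x : G) ∈ N ⊓ U := ⟨x.2, hx⟩
  rw [h, Subgroup.mem_bot] at this
  exact Subtype.ext this

theorem CompactlyGeneratedGroup.sInf_ne_bot_of_normalCore_eq_bot
    (hcg : CompactlyGeneratedGroup G) {U : Subgroup G} (hUo : IsOpen (U : Set G))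
    (hUc : IsCompact (U : Set G)) (hcore : U.normalCore = ⊥) {F : Set (Subgroup G)}
    (hne : F.Nonempty) (hdir : DirectedOn (· ≥ ·) F)
    (hF : ∀ N ∈ F, N.Normal ∧ IsClosed (N : Set G) ∧ ¬ DiscreteTopology N) : sInf F ≠ ⊥ := by
  obtain ⟨S, hSc, hS⟩ := hcg
  set W := {x : G | ∀ g ∈ S ∪ S⁻¹, g * x * g⁻¹ ∈ U}
  have hWo : IsOpen W := isOpen_setOf_forall_conj_mem (hSc.union hSc.inv) hUo
  have h1W : (1 : G) ∈ W := fun g _ => by simp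
  have hmeet : ∀ N ∈ F, ∃ x ∈ N, x ∈ U ∧ x ∉ W := by
    intro N hN
    by_contra! hNW
    obtain ⟨hNn, -, hNd⟩ := hF N hN
    have : (N ⊓ U).Normal := Subgroup.normal_of_forall_conj_mem hS
      fun g hg x hx => ⟨hNn.conj_mem x hx.1 g, hNW x hx.1 hx.2 g hg⟩
    refine hNd (Subgroup.discreteTopology_of_inf_eq_bot hUo (le_bot_iff.1 ?_))
    exact hcore ▸ Subgroup.normal_le_normalCore.2 inf_le_right
  obtain ⟨x, hxF, -, hxW⟩ := Subgroup.sInf_inter_nonempty_of_directedOn hne hdir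
    (fun N hN => (hF N hN).2.1) (hUc.diff hWo)
    ((U.isClosed_of_isOpen hUo).inter hWo.isClosed_compl) hmeet
  intro hbot
  rw [hbot, SetLike.mem_coe, Subgroup.mem_bot] at hxF
  exact hxW (hxF ▸ h1W)

end Group

/-- **Proposition (Caprace–Monod).** Let `G` be a compactly generated totally
disconnected locally compact Hausdorff group. Then any identity neighbourhood
`V` contains a compact normal subgroup `Q` such that any filtering family of
non-discrete closed normal subgroups of `G/Q` has non-trivial intersection. -/
theorem filter_of_closed_normal_subgroups (G : Type*) [Group G] [TopologicalSpace G]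
    [IsTopologicalGroup G] [LocallyCompactSpace G] [T2Space G]
    [TotallyDisconnectedSpace G]
    (hcg : CompactlyGeneratedGroup G) :
    ∀ V ∈ nhds (1 : G), ∃ Q : Subgroup G, ∃ hQ : Q.Normal,
      IsCompact (Q : Set G) ∧ (Q : Set G) ⊆ V ∧
      (haveI := hQ;
        ∀ F : Set (Subgroup (G ⧸ Q)),
          F.Nonempty →
          (∀ A ∈ F, ∀ B ∈ F, ∃ C ∈ F, C ≤ A ∧ C ≤ B) →
          (∀ N ∈ F, N.Normal ∧ IsClosed (N : Set (G ⧸ Q)) ∧ ¬ DiscreteTopology ↥N) →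
          sInf F ≠ ⊥) := by
  intro V hV
  obtain ⟨U, hUo, hUc, hUV⟩ := exists_isOpen_isCompact_subgroup_subset hV
  have hQc : IsClosed (U.normalCore : Set G) := U.normalCore_isClosed (U.isClosed_of_isOpen hUo)
  refine ⟨U.normalCore, inferInstance, hUc.of_isClosed_subset hQc U.normalCore_le,
    (SetLike.coe_subset_coe.2 U.normalCore_le).trans hUV, fun F hne hdir hF => ?_⟩
  have hmap : (U.map (QuotientGroup.mk' U.normalCore) : Set (G ⧸ U.normalCore)) =
      QuotientGroup.mk '' U := Subgroup.coe_map _ _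
  refine (hcg.of_surjective _ continuous_quotient_mk' (QuotientGroup.mk'_surjective _))
    |>.sInf_ne_bot_of_normalCore_eq_bot ?_ ?_ U.normalCore_map_mk'_normalCore hne hdir hF
  · exact hmap ▸ QuotientGroup.isOpenMap_coe _ hUo
  · exact hmap ▸ hUc.image continuous_quotient_mk'
end

section
/- Let G be a compactly generated totally disconnected locally compact Hausdorff group admitting an open subgroup H which is quasi-discrete. Then either G is compact, or G possesses an infinite discrete quotient: there is a closed normal subgroup N of G such that G/N is discrete and infinite. -/
open scoped Pointwise Topology

/-!
The closure `M` of the quasi-centre contains the open quasi-discrete subgroup, so `M` is an open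
normal subgroup and `G ⧸ M` is discrete; if it is infinite we are done. Otherwise `M` is compactly
generated (Schreier), so for a compact open subgroup `U ≤ M` (van Dantzig), density of the
quasi-centre shows that `M` is generated by `U` and finitely many quasi-central elements
`q₁, …, qₙ`. The subgroup `U ∩ C(q₁, …, qₙ)` is open and, `U` being profinite, contains an open
subgroup `W` normalised by `U` and by the `qᵢ`, hence by `M`. So `W` has only finitely many
conjugates and its normal core `N` is a compact open normal subgroup: either `G ⧸ N` is an infinite
discrete quotient, or `G` is a finite union of cosets of `N`, hence compact.
-/

open Set Filter

section

variable {G : Type*} [Group G] [TopologicalSpace G] [IsTopologicalGroup G]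

theorem exists_isOpen_isCompact_subgroup [LocallyCompactSpace G] [T2Space G]
    [TotallyDisconnectedSpace G] : ∃ U : Subgroup G, IsOpen (U : Set G) ∧ IsCompact (U : Set G) := by
  obtain ⟨K, hK, hK1⟩ := exists_compact_mem_nhds (1 : G)
  obtain ⟨W, ⟨hWc, hWo⟩, hW1, hWK⟩ := loc_compact_Haus_tot_disc_of_zero_dim.mem_nhds_iff.mp hK1
  have hW : IsCompact W := hK.of_isClosed_subset hWc hWK
  obtain ⟨V, hV, hWV⟩ := compact_open_separated_mul_right hW hWo subset_rfl
  set U := Subgroup.closure (V ∩ V⁻¹)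
  have hUo : IsOpen (U : Set G) := U.isOpen_of_mem_nhds (g := 1) <|
    mem_of_superset (inter_mem hV (inv_mem_nhds_one G hV)) Subgroup.subset_closure
  have hUW : (U : Set G) ⊆ W := fun x hx => by
    induction hx using Subgroup.closure_induction_right with
    | one => exact hW1
    | mul_right x _ y hy hx => exact hWV (mul_mem_mul hx hy.1)
    | mul_inv_cancel x _ y hy hx => exact hWV (mul_mem_mul hx hy.2)
  exact ⟨U, hUo, hW.of_isClosed_subset (U.isClosed_of_isOpen hUo) hUW⟩

theorem isOpen_centralizer_iff_eventually_commute {s : Set G} (hs : s.Finite) :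
    IsOpen (Subgroup.centralizer s : Set G) ↔ ∀ x ∈ s, ∀ᶠ y in 𝓝 1, Commute x y := by
  rw [← eventually_all_finite hs]
  exact ⟨fun h => h.mem_nhds (Subgroup.one_mem _), (Subgroup.centralizer s).isOpen_of_mem_nhds⟩

theorem isOpen_centralizer_singleton_iff {x : G} :
    IsOpen (Subgroup.centralizer {x} : Set G) ↔ ∀ᶠ y in 𝓝 1, Commute x y := by
  simp [isOpen_centralizer_iff_eventually_commute (finite_singleton x)]

variable (G) in
def quasiCentre : Subgroup G where
  carrier := {x | IsOpen (Subgroup.centralizer {x} : Set G)}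
  one_mem' := isOpen_centralizer_singleton_iff.mpr (.of_forall Commute.one_left)
  mul_mem' ha hb := isOpen_centralizer_singleton_iff.mpr <|
    ((isOpen_centralizer_singleton_iff.mp ha).and (isOpen_centralizer_singleton_iff.mp hb)).mono
      fun _ h => h.1.mul_left h.2
  inv_mem' ha := isOpen_centralizer_singleton_iff.mpr <|
    (isOpen_centralizer_singleton_iff.mp ha).mono fun _ h => h.inv_left

theorem mem_quasiCentre_iff {x : G} : x ∈ quasiCentre G ↔ ∀ᶠ y in 𝓝 1, Commute x y :=
  isOpen_centralizer_singleton_iff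

instance quasiCentre.normal : (quasiCentre G).Normal where
  conj_mem x hx g := by
    rw [mem_quasiCentre_iff] at hx ⊢
    have hconj : Tendsto (fun y => g⁻¹ * y * g) (𝓝 1) (𝓝 1) := by
      simpa using ((continuous_const_mul g⁻¹).mul_const g).tendsto (1 : G)
    filter_upwards [hconj.eventually hx] with y hy
    simpa [MulAut.conj_apply, mul_assoc] using hy.map (MulAut.conj g)

theorem map_subtype_quasiCentre_le {H : Subgroup G} (hH : IsOpen (H : Set G)) :
    (quasiCentre H).map H.subtype ≤ quasiCentre G := by
  rintro - ⟨x, hx : x ∈ quasiCentre H, rfl⟩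
  rw [mem_quasiCentre_iff] at hx ⊢
  rw [← H.coe_one, ← hH.isOpenEmbedding_subtypeVal.map_nhds_eq, eventually_map]
  exact hx.mono fun y hy => hy.map H.subtype

theorem subset_closure_quasiCentre {H : Subgroup G} (hH : IsOpen (H : Set G))
    (hd : Dense (quasiCentre H : Set H)) : (H : Set G) ⊆ closure (quasiCentre G : Set G) :=
  calc (H : Set G) = (↑) '' closure (quasiCentre H : Set H) := by
        rw [hd.closure_eq, image_univ, Subtype.range_coe]
    _ ⊆ closure ((↑) '' (quasiCentre H : Set H)) :=
        image_closure_subset_closure_image continuous_subtype_val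
    _ ⊆ closure (quasiCentre G : Set G) := closure_mono (map_subtype_quasiCentre_le hH)

theorem isOpen_topologicalClosure_quasiCentre {H : Subgroup G} (hH : IsOpen (H : Set G))
    (hd : Dense (quasiCentre H : Set H)) :
    IsOpen ((quasiCentre G).topologicalClosure : Set G) :=
  Subgroup.isOpen_mono (subset_closure_quasiCentre hH hd) hH

theorem exists_isCompact_closure_eq_of_finiteIndex {S : Set G} (hS : IsCompact S)
    (hSG : Subgroup.closure S = ⊤) {M : Subgroup G} [M.FiniteIndex] (hM : IsClosed (M : Set G)) :
    ∃ K : Set G, IsCompact K ∧ Subgroup.closure K = M := by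
  obtain ⟨R, hR, hR1⟩ := M.exists_isComplement_right 1
  have hRc : IsCompact R := (@toFinite _ _ (hR.finite_right_iff.mpr ‹_›)).isCompact
  refine ⟨R * S * R⁻¹ ∩ M, ((hRc.mul hS).mul hRc.inv).inter_right hM,
    le_antisymm (Subgroup.closure_le _ |>.mpr inter_subset_right) ?_⟩
  refine (Subgroup.closure_mul_image_eq hR hR1 hSG).ge.trans (Subgroup.closure_mono ?_)
  rintro - ⟨g, hg, rfl⟩
  exact ⟨mul_mem_mul hg (inv_mem_inv.mpr (hR.toRightFun g).2), hR.mul_inv_toRightFun_mem g⟩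

theorem IsCompact.exists_finite_subset_mul_of_subset_closure {K Q : Set G} (hK : IsCompact K)
    (hKQ : K ⊆ closure Q) {U : Subgroup G} (hU : IsOpen (U : Set G)) :
    ∃ F ⊆ Q, F.Finite ∧ K ⊆ F * U := by
  have hcover : K ⊆ ⋃ q ∈ Q, q • (U : Set G) := fun k hk => by
    obtain ⟨q, ⟨u, hu, rfl⟩, hq⟩ :=
      mem_closure_iff.mp (hKQ hk) _ (hU.smul k) ⟨1, U.one_mem, mul_one k⟩
    exact mem_biUnion hq ⟨u⁻¹, U.inv_mem hu, by simp⟩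
  obtain ⟨F, hFQ, hF, hKF⟩ := hK.elim_finite_subcover_image (fun q _ => hU.smul q) hcover
  exact ⟨F, hFQ, hF, hKF.trans (iUnion_smul_left_image).subset⟩

theorem exists_isOpen_le_normalizer_of_isCompact {U V : Subgroup G} (hUo : IsOpen (U : Set G))
    (hUc : IsCompact (U : Set G)) (hV : IsOpen (V : Set G)) :
    ∃ W : Subgroup G, IsOpen (W : Set G) ∧ W ≤ V ∧ U ≤ Subgroup.normalizer (W : Set G) := by
  have : CompactSpace U := isCompact_iff_compactSpace.mp hUc
  have hVU : IsClopen (((↑) : U → G) ⁻¹' V) :=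
    ⟨(V.isClosed_of_isOpen hV).preimage continuous_subtype_val, hV.preimage continuous_subtype_val⟩
  obtain ⟨W, hWV⟩ := IsTopologicalGroup.exist_openNormalSubgroup_sub_clopen_nhds_of_one hVU V.one_mem
  refine ⟨W.toSubgroup.map U.subtype, ?_, by rintro - ⟨x, hx, rfl⟩; exact hWV hx, fun u hu => ?_⟩
  · rw [Subgroup.coe_map]
    exact hUo.isOpenMap_subtype_val _ W.isOpen
  · exact Subgroup.le_normalizer_map U.subtype ⟨⟨u, hu⟩, Subgroup.normalizer_eq_top (H := W.toSubgroup) ▸ trivial, rfl⟩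

theorem Subgroup.isOpen_normalCore {W : Subgroup G} (hW : IsOpen (W : Set G))
    [(normalizer (W : Set G)).FiniteIndex] : IsOpen (W.normalCore : Set G) := by
  set P := normalizer (W : Set G)
  have hcore : (W.normalCore : Set G) = ⋂ c : G ⧸ P, (fun a => c.out⁻¹ * a * c.out) ⁻¹' W := by
    ext a
    simp only [mem_iInter, mem_preimage, SetLike.mem_coe]
    refine ⟨fun ha c => by simpa using ha c.out⁻¹, fun ha b => ?_⟩
    obtain ⟨n, hn⟩ := QuotientGroup.mk_out_eq_mul P b⁻¹
    have := ha (QuotientGroup.mk b⁻¹)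
    rw [hn] at this
    refine (mem_normalizer_iff''.mp n.2 _).mpr ?_
    convert this using 1
    group
  rw [hcore]
  exact isOpen_iInter_of_finite fun c => hW.preimage (by fun_prop)

theorem compactSpace_of_isCompact_of_finite_quotient {N : Subgroup G}
    (hN : IsCompact (N : Set G)) [Finite (G ⧸ N)] : CompactSpace G := by
  refine isCompact_univ_iff.mp <|
    ((finite_range (Quotient.out : G ⧸ N → G)).isCompact.mul hN).of_isClosed_subset isClosed_univ fun g _ => ?_
  obtain ⟨n, hn⟩ := QuotientGroup.mk_out_eq_mul N g
  exact ⟨_, mem_range_self (g : G ⧸ N), n⁻¹, N.inv_mem n.2, by rw [hn]; group⟩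

theorem exists_isOpen_isCompact_normal_of_finiteIndex [LocallyCompactSpace G] [T2Space G]
    [TotallyDisconnectedSpace G] (hcg : CompactlyGeneratedGroup G)
    [(quasiCentre G).topologicalClosure.FiniteIndex] :
    ∃ N : Subgroup G, N.Normal ∧ IsOpen (N : Set G) ∧ IsCompact (N : Set G) := by
  set M := (quasiCentre G).topologicalClosure
  have hMc : IsClosed (M : Set G) := (quasiCentre G).isClosed_topologicalClosure
  have hMo : IsOpen (M : Set G) := M.isOpen_of_isClosed_of_finiteIndex hMc
  obtain ⟨S, hS, hSG⟩ := hcg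
  obtain ⟨K, hK, hKM⟩ := exists_isCompact_closure_eq_of_finiteIndex hS hSG hMc
  obtain ⟨U₀, hU₀o, hU₀c⟩ := exists_isOpen_isCompact_subgroup (G := G)
  set U := U₀ ⊓ M
  have hUo : IsOpen (U : Set G) := hU₀o.inter hMo
  have hUc : IsCompact (U : Set G) := hU₀c.inter_right hMc
  obtain ⟨F, hFQ, hF, hKF⟩ :=
    hK.exists_finite_subset_mul_of_subset_closure (hKM ▸ Subgroup.subset_closure) hUo
  have hFo : IsOpen (Subgroup.centralizer F : Set G) :=
    (isOpen_centralizer_iff_eventually_commute hF).mpr fun x hx => mem_quasiCentre_iff.mp (hFQ hx)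
  obtain ⟨W, hWo, hWUF, hUW⟩ := exists_isOpen_le_normalizer_of_isCompact
    (V := U ⊓ Subgroup.centralizer F) hUo hUc (hUo.inter hFo)
  have hFW : F ⊆ Subgroup.normalizer (W : Set G) := fun q hq =>
    Subgroup.centralizer_le_normalizer _ <| Subgroup.mem_centralizer_iff.mpr fun w hw =>
      (Subgroup.mem_centralizer_iff.mp (hWUF hw).2 q hq).symm
  have hMW : M ≤ Subgroup.normalizer (W : Set G) := by
    rw [← hKM, Subgroup.closure_le]
    refine hKF.trans ?_
    rintro - ⟨q, hq, u, hu, rfl⟩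
    exact mul_mem (hFW hq) (hUW hu)
  have := Subgroup.finiteIndex_of_le hMW
  exact ⟨W.normalCore, inferInstance, W.isOpen_normalCore hWo,
    hUc.of_isClosed_subset (W.normalCore.isClosed_of_isOpen (W.isOpen_normalCore hWo))
      (W.normalCore_le.trans (hWUF.trans inf_le_left))⟩

theorem exists_discrete_infinite_quotient {N : Subgroup G} [N.Normal] (hN : IsOpen (N : Set G))
    [Infinite (G ⧸ N)] : ∃ N : Subgroup G, N.Normal ∧ IsClosed (N : Set G) ∧
      DiscreteTopology (G ⧸ N) ∧ Infinite (G ⧸ N) :=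
  ⟨N, ‹_›, N.isClosed_of_isOpen hN, QuotientGroup.discreteTopology hN, ‹_›⟩

end

/-- **Corollary (Caprace–Monod).** Let `G` be a compactly generated totally
disconnected locally compact Hausdorff group admitting an open quasi-discrete
subgroup. Then either `G` is compact or `G` possesses an infinite discrete
quotient. -/
theorem open_quasi_discrete_subgroup (G : Type*) [Group G] [TopologicalSpace G]
    [IsTopologicalGroup G] [LocallyCompactSpace G] [T2Space G]
    [TotallyDisconnectedSpace G]
    (hcg : CompactlyGeneratedGroup G)
    (hH : ∃ H : Subgroup G, IsOpen (H : Set G) ∧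
      Dense {x : ↥H | IsOpen ((Subgroup.centralizer {x} : Subgroup ↥H) : Set ↥H)}) :
    CompactSpace G ∨
    ∃ N : Subgroup G, N.Normal ∧ IsClosed (N : Set G) ∧
      DiscreteTopology (G ⧸ N) ∧ Infinite (G ⧸ N) := by
  obtain ⟨H, hHo, hHd⟩ := hH
  set M := (quasiCentre G).topologicalClosure
  have : M.Normal := Subgroup.is_normal_topologicalClosure _
  have hMo : IsOpen (M : Set G) := isOpen_topologicalClosure_quasiCentre hHo hHd
  rcases finite_or_infinite (G ⧸ M) with hM | hM
  · have := M.finiteIndex_of_finite_quotient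
    obtain ⟨N, hNn, hNo, hNc⟩ := exists_isOpen_isCompact_normal_of_finiteIndex hcg
    rcases finite_or_infinite (G ⧸ N) with hN | hN
    · exact .inl (compactSpace_of_isCompact_of_finite_quotient hNc)
    · exact .inr (exists_discrete_infinite_quotient hNo)
  · exact .inr (exists_discrete_infinite_quotient hMo)
end

section
/- Let G be a totally disconnected compactly generated non-compact locally compact Hausdorff group. Then there exists a closed normal subgroup N of G such that the quotient group G/N is non-compact and every non-trivial closed normal subgroup of G/N is cocompact in G/N. -/
open scoped Pointwise Topology

/-!
Fix a compact symmetric generating neighbourhood `V` of `1`. Then `G ⧸ N` is compact iff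
`V ^ k * N = G` for some `k`, and already `V ^ (k + 1) ⊆ V ^ k * N` forces `V ^ k * N = G`.
Hence compactness of `G ⧸ N` passes from the closure of `N` to `N`, and from the union of a
chain to one of its members, because the compact set `V ^ (k + 2)` is covered by finitely many
of the open sets `V ^ k * interior V * N`. By Zorn's lemma there is a maximal closed normal `N`
with `G ⧸ N` non-compact, and a nontrivial closed normal subgroup of `G ⧸ N` pulls back to a
strictly larger closed normal subgroup of `G`, which is therefore cocompact.
-/

open Set

section Generation

variable {G : Type*} [Group G]

theorem Subgroup.exists_mem_pow_of_mem_closure {V : Set G} (hVs : V⁻¹ = V) {g : G}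
    (hg : g ∈ Subgroup.closure V) : ∃ k : ℕ, g ∈ V ^ k := by
  induction hg using Subgroup.closure_induction with
  | mem x hx => exact ⟨1, by rwa [pow_one]⟩
  | one => exact ⟨0, by rw [pow_zero]; exact mem_one.mpr rfl⟩
  | mul x y _ _ hx hy =>
    obtain ⟨k, hk⟩ := hx
    obtain ⟨l, hl⟩ := hy
    exact ⟨k + l, by rw [pow_add]; exact mul_mem_mul hk hl⟩
  | inv x _ hx =>
    obtain ⟨k, hk⟩ := hx
    exact ⟨k, by rw [← hVs, inv_pow]; exact inv_mem_inv.mpr hk⟩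

theorem eq_univ_of_one_mem_of_mul_subset {A V : Set G} (hVs : V⁻¹ = V)
    (hVg : Subgroup.closure V = ⊤) (hA1 : 1 ∈ A) (hAV : A * V ⊆ A) : A = univ := by
  have hpow : ∀ k : ℕ, V ^ k ⊆ A := by
    intro k
    induction k with
    | zero => rw [pow_zero]; exact singleton_subset_iff.mpr hA1
    | succ k ih => rw [pow_succ]; exact (mul_subset_mul_right ih).trans hAV
  refine eq_univ_of_forall fun g => ?_
  obtain ⟨k, hk⟩ := Subgroup.exists_mem_pow_of_mem_closure hVs (hVg ▸ Subgroup.mem_top g)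
  exact hpow k hk

theorem pow_mul_eq_univ_of_pow_succ_subset {V : Set G} (hV1 : 1 ∈ V) (hVs : V⁻¹ = V)
    (hVg : Subgroup.closure V = ⊤) {N : Subgroup G} [N.Normal] {n : ℕ}
    (h : V ^ (n + 1) ⊆ V ^ n * (N : Set G)) : V ^ n * (N : Set G) = univ := by
  refine eq_univ_of_one_mem_of_mul_subset hVs hVg
    (by simpa using mul_mem_mul (one_mem_pow (n := n) hV1) N.one_mem) ?_
  calc V ^ n * (N : Set G) * V = V ^ (n + 1) * N := by
        rw [mul_assoc, ← Subgroup.set_mul_normal_comm, ← mul_assoc, pow_succ]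
    _ ⊆ V ^ n * N * N := mul_subset_mul_right h
    _ = V ^ n * N := by rw [mul_assoc, coe_mul_coe]

end Generation

theorem QuotientGroup.image_mk_eq_univ_iff {G : Type*} [Group G] {N : Subgroup G} {s : Set G} :
    (QuotientGroup.mk '' s : Set (G ⧸ N)) = univ ↔ s * (N : Set G) = univ := by
  rw [← QuotientGroup.preimage_image_mk_eq_mul, eq_comm, eq_comm (b := univ),
    ← preimage_univ (f := (QuotientGroup.mk : G → G ⧸ N))]
  exact ⟨fun h => h ▸ rfl, fun h => QuotientGroup.mk_surjective.preimage_injective h⟩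

theorem IsCompact.pow {M : Type*} [Monoid M] [TopologicalSpace M] [ContinuousMul M] {s : Set M}
    (hs : IsCompact s) : ∀ n : ℕ, IsCompact (s ^ n)
  | 0 => by rw [pow_zero]; exact isCompact_singleton
  | n + 1 => by rw [pow_succ]; exact (hs.pow n).mul hs

theorem compactSpace_of_compactSpace_quotient_ker {G Q : Type*} [Group G] [TopologicalSpace G]
    [Group Q] [TopologicalSpace Q] {f : G →* Q} (hf : Continuous f)
    (hsurj : Function.Surjective f) {H : Subgroup G} (hker : f.ker = H)
    [CompactSpace (G ⧸ H)] : CompactSpace Q := by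
  subst hker
  have hcont : Continuous (QuotientGroup.kerLift f) :=
    (QuotientGroup.isQuotientMap_mk _).continuous_iff.mpr hf
  exact Function.Surjective.compactSpace hcont (hsurj.of_comp (g := QuotientGroup.mk))

structure IsSymmGeneratingCompactNhd {G : Type*} [Group G] [TopologicalSpace G] (V : Set G) :
    Prop where
  isCompact : IsCompact V
  mem_nhds_one : V ∈ 𝓝 (1 : G)
  inv_eq : V⁻¹ = V
  closure_eq_top : Subgroup.closure V = ⊤

namespace IsSymmGeneratingCompactNhd

variable {G : Type*} [Group G] [TopologicalSpace G] {V : Set G}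

theorem one_mem (hV : IsSymmGeneratingCompactNhd V) : (1 : G) ∈ V :=
  mem_of_mem_nhds hV.mem_nhds_one

theorem one_mem_interior (hV : IsSymmGeneratingCompactNhd V) : (1 : G) ∈ interior V :=
  mem_interior_iff_mem_nhds.mpr hV.mem_nhds_one

variable [IsTopologicalGroup G]

theorem compactSpace_quotient_iff (hV : IsSymmGeneratingCompactNhd V) (N : Subgroup G) :
    CompactSpace (G ⧸ N) ↔ ∃ k : ℕ, V ^ k * (N : Set G) = univ := by
  simp_rw [← QuotientGroup.image_mk_eq_univ_iff]
  constructor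
  · intro _
    let U : ℕ → Set (G ⧸ N) := fun k => QuotientGroup.mk '' (V ^ k * interior V)
    have hcover : univ ⊆ ⋃ k, U k := by
      rintro x -
      obtain ⟨g, rfl⟩ := QuotientGroup.mk_surjective x
      obtain ⟨k, hk⟩ := Subgroup.exists_mem_pow_of_mem_closure hV.inv_eq
        (hV.closure_eq_top ▸ Subgroup.mem_top g)
      exact mem_iUnion.mpr ⟨k, g, ⟨g, hk, 1, hV.one_mem_interior, mul_one g⟩, rfl⟩
    have hmono : Monotone U :=
      fun i j hij => image_mono (mul_subset_mul_right (pow_subset_pow_right hV.one_mem hij))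
    obtain ⟨k, hk⟩ := isCompact_univ.elim_directed_cover U
      (fun k => QuotientGroup.isOpenMap_coe _ isOpen_interior.mul_left) hcover hmono.directed_le
    refine ⟨k + 1, univ_subset_iff.mp (hk.trans (image_mono ?_))⟩
    rw [pow_succ]
    exact mul_subset_mul_left interior_subset
  · rintro ⟨k, hk⟩
    exact ⟨hk ▸ (hV.isCompact.pow k).image QuotientGroup.continuous_mk⟩

theorem compactSpace_quotient_of_topologicalClosure (hV : IsSymmGeneratingCompactNhd V)
    {N : Subgroup G} [N.Normal] (h : CompactSpace (G ⧸ N.topologicalClosure)) :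
    CompactSpace (G ⧸ N) := by
  obtain ⟨k, hk⟩ := (hV.compactSpace_quotient_iff _).mp h
  have hsymm : ∀ x ∈ V, x⁻¹ ∈ V := fun x hx => hV.inv_eq ▸ inv_mem_inv.mpr hx
  refine (hV.compactSpace_quotient_iff N).mpr ⟨k + 1, univ_subset_iff.mp ?_⟩
  calc univ = V ^ k * (N.topologicalClosure : Set G) := hk.symm
    _ ⊆ V ^ k * (N * V) := by
        rw [Subgroup.topologicalClosure_coe]
        exact mul_subset_mul_left
          (closure_subset_mul_right_of_mem_nhds_one_of_inv _ hV.mem_nhds_one hsymm)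
    _ = V ^ (k + 1) * N := by rw [← Subgroup.set_mul_normal_comm, ← mul_assoc, pow_succ]

theorem exists_compactSpace_quotient_of_sSup (hV : IsSymmGeneratingCompactNhd V)
    {c : Set (Subgroup G)} (hne : c.Nonempty) (hchain : IsChain (· ≤ ·) c)
    (hnormal : ∀ N ∈ c, N.Normal) (h : CompactSpace (G ⧸ sSup c)) :
    ∃ N ∈ c, CompactSpace (G ⧸ N) := by
  obtain ⟨k, hk⟩ := (hV.compactSpace_quotient_iff _).mp h
  have hcover : V ^ (k + 2) ⊆ ⋃ N : c, V ^ k * interior V * ((N : Subgroup G) : Set G) := by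
    intro x _
    obtain ⟨v, hv, d, hd, rfl⟩ := hk.symm ▸ mem_univ x
    obtain ⟨N, hN, hdN⟩ := (Subgroup.mem_sSup_of_directedOn hne hchain.directedOn).mp hd
    exact mem_iUnion.mpr
      ⟨⟨N, hN⟩, v * 1, mul_mem_mul hv hV.one_mem_interior, d, hdN, by rw [mul_one]⟩
  have hdir : Directed (· ⊆ ·) fun N : c => V ^ k * interior V * ((N : Subgroup G) : Set G) :=
    (directedOn_iff_directed.mp hchain.directedOn).mono_comp _
      fun _ _ hle => mul_subset_mul_left hle
  have : Nonempty c := hne.to_subtype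
  obtain ⟨⟨N, hN⟩, hsub⟩ := (hV.isCompact.pow (k + 2)).elim_directed_cover _
    (fun _ => isOpen_interior.mul_left.mul_right) hcover hdir
  have := hnormal N hN
  refine ⟨N, hN, (hV.compactSpace_quotient_iff N).mpr ⟨k + 1, ?_⟩⟩
  refine pow_mul_eq_univ_of_pow_succ_subset hV.one_mem hV.inv_eq hV.closure_eq_top
    (hsub.trans (mul_subset_mul_right ?_))
  rw [pow_succ]
  exact mul_subset_mul_left interior_subset

end IsSymmGeneratingCompactNhd

theorem CompactlyGeneratedGroup.exists_isSymmGeneratingCompactNhd {G : Type*} [Group G]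
    [TopologicalSpace G] [IsTopologicalGroup G] [WeaklyLocallyCompactSpace G]
    (hcg : CompactlyGeneratedGroup G) : ∃ V : Set G, IsSymmGeneratingCompactNhd V := by
  obtain ⟨S, hSc, hSg⟩ := hcg
  obtain ⟨K, hKc, hK1⟩ := exists_compact_mem_nhds (1 : G)
  refine ⟨(K ∪ S) ∪ (K ∪ S)⁻¹, (hKc.union hSc).union (hKc.union hSc).inv,
    Filter.mem_of_superset hK1 (subset_union_left.trans subset_union_left),
    by rw [union_inv, inv_inv, union_comm], ?_⟩
  exact eq_top_iff.mpr (hSg ▸ Subgroup.closure_mono (subset_union_right.trans subset_union_left))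

theorem CompactlyGeneratedGroup.exists_maximal_closed_normal_not_compactSpace_quotient
    {G : Type*} [Group G] [TopologicalSpace G] [IsTopologicalGroup G]
    [WeaklyLocallyCompactSpace G] (hcg : CompactlyGeneratedGroup G) (hnc : ¬ CompactSpace G) :
    ∃ N : Subgroup G, Maximal
      (fun N : Subgroup G => N.Normal ∧ IsClosed (N : Set G) ∧ ¬ CompactSpace (G ⧸ N)) N := by
  obtain ⟨V, hV⟩ := hcg.exists_isSymmGeneratingCompactNhd
  refine zorn_le₀ _ fun c hc hchain => ?_
  have hnormal : ∀ N ∈ c, N.Normal := fun N hN => (hc hN).1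
  have := Subgroup.sSup_normal c hnormal
  refine ⟨(sSup c).topologicalClosure, ⟨(sSup c).is_normal_topologicalClosure,
    (sSup c).isClosed_topologicalClosure, fun h => ?_⟩,
    fun N hN => (le_sSup hN).trans (sSup c).le_topologicalClosure⟩
  replace h := hV.compactSpace_quotient_of_topologicalClosure h
  rcases c.eq_empty_or_nonempty with rfl | hne
  · rw [sSup_empty] at h
    exact hnc (compactSpace_of_compactSpace_quotient_ker (f := MonoidHom.id G) continuous_id
      Function.surjective_id MonoidHom.ker_id)
  · obtain ⟨N, hN, hNc⟩ := hV.exists_compactSpace_quotient_of_sSup hne hchain hnormal h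
    exact (hc hN).2.2 hNc

theorem QuotientGroup.lt_comap_mk' {G : Type*} [Group G] {N : Subgroup G} [N.Normal]
    {K : Subgroup (G ⧸ N)} (hK : K ≠ ⊥) : N < K.comap (QuotientGroup.mk' N) := by
  refine lt_of_le_of_ne (QuotientGroup.le_comap_mk' N K) fun h => hK ?_
  rw [← Subgroup.map_comap_eq_self_of_surjective (QuotientGroup.mk'_surjective N) K, ← h,
    QuotientGroup.map_mk'_self]

theorem exists_just_non_compact_quotient_general (G : Type*) [Group G] [TopologicalSpace G]
    [IsTopologicalGroup G] [LocallyCompactSpace G]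
    (hcg : CompactlyGeneratedGroup G) (hnc : ¬ CompactSpace G) :
    ∃ N : Subgroup G, ∃ hN : N.Normal, IsClosed (N : Set G) ∧
      ¬ CompactSpace (G ⧸ N) ∧
      (haveI := hN;
        ∀ K : Subgroup (G ⧸ N), K.Normal → IsClosed (K : Set (G ⧸ N)) → K ≠ ⊥ →
          CompactSpace ((G ⧸ N) ⧸ K)) := by
  obtain ⟨N, hNmax⟩ := hcg.exists_maximal_closed_normal_not_compactSpace_quotient hnc
  obtain ⟨hN, hNc, hNnc⟩ := hNmax.prop
  refine ⟨N, hN, hNc, hNnc, fun K hK hKc hKne => ?_⟩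
  have hcompact : CompactSpace (G ⧸ K.comap (QuotientGroup.mk' N)) := by
    by_contra h
    exact hNmax.not_prop_of_gt (QuotientGroup.lt_comap_mk' hKne)
      ⟨hK.comap _, hKc.preimage QuotientGroup.continuous_mk, h⟩
  exact compactSpace_of_compactSpace_quotient_ker
    (f := (QuotientGroup.mk' K).comp (QuotientGroup.mk' N))
    (QuotientGroup.continuous_mk.comp QuotientGroup.continuous_mk)
    ((QuotientGroup.mk'_surjective K).comp (QuotientGroup.mk'_surjective N))
    (by rw [← MonoidHom.comap_ker, QuotientGroup.ker_mk'])

/-- **Proposition (Grigorchuk–Willis).** Every totally disconnected compactly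
generated non-compact locally compact Hausdorff group admits a non-compact
quotient all of whose non-trivial closed normal subgroups are cocompact. -/
theorem exists_just_non_compact_quotient (G : Type*) [Group G] [TopologicalSpace G]
    [IsTopologicalGroup G] [LocallyCompactSpace G] [T2Space G]
    [TotallyDisconnectedSpace G]
    (hcg : CompactlyGeneratedGroup G) (hnc : ¬ CompactSpace G) :
    ∃ N : Subgroup G, ∃ hN : N.Normal, IsClosed (N : Set G) ∧
      ¬ CompactSpace (G ⧸ N) ∧
      (haveI := hN;
        ∀ K : Subgroup (G ⧸ N), K.Normal → IsClosed (K : Set (G ⧸ N)) → K ≠ ⊥ →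
          CompactSpace ((G ⧸ N) ⧸ K)) :=
  exists_just_non_compact_quotient_general G hcg hnc
end

section
/- Let A be a Hausdorff topological group containing p normal subgroups L_1, …, L_p, each dense in A, such that the intersection L_1 ∩ ⋯ ∩ L_p is trivial. Then A is nilpotent of nilpotency class at most p − 1. -/
open scoped Pointwise Topology

/-!
Write `Z_k` for the upper central series of `A` and `M_t` for the intersection of the `L i`
with `i ∉ t`. Since all the `L i` are normal, `⁅M_{t ∪ {j}}, L j⁆ ≤ M_t`. Each `Z_k` is closed
and commutation with a fixed element is continuous, so `⁅M, L j⁆ ≤ Z_k` for the dense subgroup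
`L j` forces `⁅M, A⁆ ≤ Z_k`, that is `M ≤ Z_{k+1}`. Starting from `M_∅ = ⊥` and removing all
indices but one, each `L i` lies in `Z_{p-1}`, which is closed and dense, hence all of `A`.
-/

open Finset
open scoped commutatorElement

@[fun_prop]
theorem Continuous.commutatorElement {G X : Type*} [Group G] [TopologicalSpace G]
    [IsTopologicalGroup G] [TopologicalSpace X] {f g : X → G} (hf : Continuous f)
    (hg : Continuous g) : Continuous fun x => ⁅f x, g x⁆ := by
  simp only [commutatorElement_def]
  fun_prop

namespace Subgroup

theorem le_upperCentralSeries_succ_iff {G : Type*} [Group G] {M : Subgroup G} {n : ℕ} :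
    M ≤ upperCentralSeries G (n + 1) ↔ ⁅M, ⊤⁆ ≤ upperCentralSeries G n := by
  rw [commutator_le]
  exact ⟨fun h m hm g _ => h hm g, fun h m hm g => h m hm g (mem_top g)⟩

variable {A : Type*} [Group A] [TopologicalSpace A]

theorem eq_top_of_dense_of_isClosed {H : Subgroup A} (hdense : Dense (H : Set A))
    (hclosed : IsClosed (H : Set A)) : H = ⊤ :=
  eq_top_iff.2 fun x _ => hdense.induction (P := (· ∈ H)) (fun _ hx => hx) hclosed x

variable [IsTopologicalGroup A]

theorem commutator_top_le_of_dense {M N H : Subgroup A} (hN : Dense (N : Set A))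
    (hH : IsClosed (H : Set A)) (h : ⁅M, N⁆ ≤ H) : ⁅M, ⊤⁆ ≤ H := by
  rw [commutator_le] at h ⊢
  intro m hm g _
  have hclosed : IsClosed {y : A | ⁅m, y⁆ ∈ H} := hH.preimage (by fun_prop)
  exact hN.induction (P := fun y => ⁅m, y⁆ ∈ H) (h m hm) hclosed g

variable [T1Space A]

theorem isClosed_upperCentralSeries (n : ℕ) :
    IsClosed (upperCentralSeries A n : Set A) := by
  induction n with
  | zero => simp
  | succ n ih =>
    have hcoe : (upperCentralSeries A (n + 1) : Set A) =
        ⋂ y : A, (fun x : A => ⁅x, y⁆) ⁻¹' (upperCentralSeries A n : Set A) := by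
      ext x
      simp only [SetLike.mem_coe, Set.mem_iInter, Set.mem_preimage,
        mem_upperCentralSeries_succ_iff]
    rw [hcoe]
    exact isClosed_iInter fun y => ih.preimage (by fun_prop)

theorem le_upperCentralSeries_succ_of_commutator_le {M N : Subgroup A} {n : ℕ}
    (hN : Dense (N : Set A)) (h : ⁅M, N⁆ ≤ upperCentralSeries A n) :
    M ≤ upperCentralSeries A (n + 1) :=
  le_upperCentralSeries_succ_iff.2 <|
    commutator_top_le_of_dense hN (isClosed_upperCentralSeries n) h

variable {ι : Type*} {L : ι → Subgroup A}

theorem iInf_notMem_le_upperCentralSeries (hnorm : ∀ i, (L i).Normal)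
    (hdense : ∀ i, Dense (L i : Set A)) (hint : ⨅ i, L i = ⊥) (t : Finset ι) :
    ⨅ (i) (_ : i ∉ t), L i ≤ upperCentralSeries A #t := by
  classical
  induction t using Finset.induction_on with
  | empty => simp [hint]
  | @insert j t hj ih =>
    rw [card_insert_of_notMem hj]
    refine le_upperCentralSeries_succ_of_commutator_le (hdense j) (le_trans ?_ ih)
    rw [commutator_le]
    intro m hm l hl
    simp only [mem_iInf, Finset.mem_insert, not_or] at hm ⊢
    intro i hi
    have := hnorm i
    rcases eq_or_ne i j with rfl | hij
    · exact commutator_le_right ⊤ (L i) (commutator_mem_commutator (mem_top m) hl)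
    · exact commutator_le_left (L i) ⊤ (commutator_mem_commutator (hm i ⟨hij, hi⟩) (mem_top l))

theorem le_upperCentralSeries_card_sub_one [Fintype ι] (hnorm : ∀ i, (L i).Normal)
    (hdense : ∀ i, Dense (L i : Set A)) (hint : ⨅ i, L i = ⊥) (i : ι) :
    L i ≤ upperCentralSeries A (Fintype.card ι - 1) := by
  classical
  have hle : L i ≤ ⨅ (k) (_ : k ∉ univ.erase i), L k := by
    simp only [le_iInf_iff, mem_erase, mem_univ, and_true, not_not]
    rintro k rfl
    rfl
  simpa [card_erase_of_mem] using
    hle.trans (iInf_notMem_le_upperCentralSeries hnorm hdense hint (univ.erase i))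

end Subgroup

/-- **Lemma (Caprace–Monod).** Let `A` be a Hausdorff topological group containing
`p` dense normal subgroups `L 0, …, L (p-1)` with trivial intersection. Then
`A` is nilpotent of class at most `p - 1`: its upper central series reaches `A`
after at most `p - 1` steps. -/
theorem nilpotent_of_dense_normal_subgroups (A : Type*) [Group A]
    [TopologicalSpace A] [IsTopologicalGroup A] [T2Space A]
    (p : ℕ) (hp : 0 < p) (L : Fin p → Subgroup A)
    (hnorm : ∀ i, (L i).Normal)
    (hdense : ∀ i, Dense ((L i : Subgroup A) : Set A))
    (hint : ⨅ i, L i = ⊥) :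
    upperCentralSeries A (p - 1) = ⊤ := by
  have hle : L ⟨0, hp⟩ ≤ Subgroup.upperCentralSeries A (p - 1) := by
    simpa using Subgroup.le_upperCentralSeries_card_sub_one hnorm hdense hint ⟨0, hp⟩
  exact Subgroup.eq_top_of_dense_of_isClosed ((hdense ⟨0, hp⟩).mono hle)
    (Subgroup.isClosed_upperCentralSeries (p - 1))
end
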